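/- arXiv:1712.00150 — 6 statements merged into one kernel-verified Lean document; each statement's English description precedes it below -/
import Mathlib

section
/- Let t, r, d be positive integers and e an integer with 0 ≤ e < d. The standard pattern set T(d,e) = {(dx+ey, y) : x, y ∈ ℤ} ⊆ ℤ×ℤ is a (t,r) broadcast if and only if for every integer i with 0 ≤ i < d, the total signal received at the vertex (i,0) from the towers in T(d,e) is at least r. -/
open Filter Topology

/-- Graph (L¹) distance on the infinite grid ℤ×ℤ. -/
def gridDist (u v : ℤ × ℤ) : ℕ := (u.1 - v.1).natAbs + (u.2 - v.2).natAbs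

open Classical in
/-- Total signal received at `v` from towers of strength `t` located at the points of `S`:
the finite sum `∑_{T ∈ S, dist(v,T) < t} (t − dist(v,T))`. -/
noncomputable def totalSignal (t : ℕ) (S : Set (ℤ × ℤ)) (v : ℤ × ℤ) : ℕ :=
  ∑ T ∈ (Finset.Icc (v.1 - (t : ℤ)) (v.1 + (t : ℤ)) ×ˢ
      Finset.Icc (v.2 - (t : ℤ)) (v.2 + (t : ℤ))).filter
      (fun T => T ∈ S ∧ gridDist v T < t),
    (t - gridDist v T)

/-- `S` is a `(t,r)` broadcast if every vertex receives total signal at least `r`. -/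
def IsBroadcast (t r : ℕ) (S : Set (ℤ × ℤ)) : Prop :=
  ∀ v : ℤ × ℤ, r ≤ totalSignal t S v

/-- The standard pattern `T(d,e) = {(dx+ey, y) : x, y ∈ ℤ}`. -/
def stdPattern (d e : ℤ) : Set (ℤ × ℤ) := {p | ∃ x y : ℤ, p = (d * x + e * y, y)}

open Classical in
/-- The number of points of `S` in the square `V_n = {(a,b) : |a| ≤ n, |b| ≤ n}`. -/
noncomputable def gridCount (S : Set (ℤ × ℤ)) (n : ℕ) : ℕ :=
  ((Finset.Icc (-(n : ℤ)) (n : ℤ) ×ˢ Finset.Icc (-(n : ℤ)) (n : ℤ)).filter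
    (fun v => v ∈ S)).card

/-! `T(d,e)` is a subgroup of `ℤ × ℤ`, so total signal from it is invariant under translation by
its elements, and `(a, b)` is a translate of `((a - e b) mod d, 0)`. -/

lemma gridDist_add_right (u v w : ℤ × ℤ) : gridDist (u + w) (v + w) = gridDist u v := by
  simp [gridDist]

lemma totalSignal_add_right {S : Set (ℤ × ℤ)} {w : ℤ × ℤ} (hS : ∀ T, T + w ∈ S ↔ T ∈ S)
    (t : ℕ) (v : ℤ × ℤ) : totalSignal t S (v + w) = totalSignal t S v := by
  classical
  have hdist : ∀ T, gridDist (v + w) (T + w) = gridDist v T := fun T => gridDist_add_right v T w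
  unfold totalSignal
  symm
  refine Finset.sum_equiv (Equiv.addRight w) (fun T => ?_) (fun T _ => by simp [hdist])
  simp only [Finset.mem_filter, Finset.mem_product, Finset.mem_Icc, Equiv.coe_addRight,
    Prod.fst_add, Prod.snd_add, hS, hdist]
  exact and_congr_left fun _ => by omega

lemma mem_stdPattern_iff {d e : ℤ} {p : ℤ × ℤ} : p ∈ stdPattern d e ↔ d ∣ p.1 - e * p.2 := by
  constructor
  · rintro ⟨x, y, rfl⟩
    exact ⟨x, by ring⟩
  · rintro ⟨x, hx⟩
    exact ⟨x, p.2, Prod.ext (by linarith) rfl⟩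

lemma add_mem_stdPattern_iff {d e : ℤ} {w : ℤ × ℤ} (hw : w ∈ stdPattern d e) (T : ℤ × ℤ) :
    T + w ∈ stdPattern d e ↔ T ∈ stdPattern d e := by
  rw [mem_stdPattern_iff] at hw ⊢
  rw [mem_stdPattern_iff, Prod.fst_add, Prod.snd_add,
    show T.1 + w.1 - e * (T.2 + w.2) = (T.1 - e * T.2) + (w.1 - e * w.2) by ring]
  exact dvd_add_left hw

lemma exists_mod_add_mem_stdPattern (d e : ℤ) (v : ℤ × ℤ) :
    ∃ w ∈ stdPattern d e, v = ((v.1 - e * v.2) % d, 0) + w :=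
  ⟨v - ((v.1 - e * v.2) % d, 0),
    mem_stdPattern_iff.2 (by simpa [sub_right_comm] using Int.dvd_self_sub_emod),
    (add_sub_cancel _ _).symm⟩

theorem stmt0_general (t r : ℕ) (d e : ℤ) (hd : 0 < d) :
    IsBroadcast t r (stdPattern d e) ↔
      ∀ i : ℤ, 0 ≤ i → i < d → r ≤ totalSignal t (stdPattern d e) (i, 0) := by
  refine ⟨fun h i _ _ => h (i, 0), fun h v => ?_⟩
  obtain ⟨w, hw, hv⟩ := exists_mod_add_mem_stdPattern d e v
  rw [hv, totalSignal_add_right (add_mem_stdPattern_iff hw)]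
  exact h _ (Int.emod_nonneg _ hd.ne') (Int.emod_lt_of_pos _ hd)

theorem stmt0 (t r : ℕ) (ht : 0 < t) (hr : 0 < r) (d e : ℤ) (hd : 0 < d)
    (he0 : 0 ≤ e) (hed : e < d) :
    IsBroadcast t r (stdPattern d e) ↔
      ∀ i : ℤ, 0 ≤ i → i < d → r ≤ totalSignal t (stdPattern d e) (i, 0) :=
  stmt0_general t r d e hd
end

section
/- Let t be a positive integer. Every (t,1) broadcast S ⊆ ℤ×ℤ satisfies liminf_{n→∞} |S ∩ V_n|/(2n+1)² ≥ 1/(2t² − 2t + 1), where V_n = {(a,b) ∈ ℤ×ℤ : |a| ≤ n, |b| ≤ n}. -/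
/-! A vertex receiving positive signal lies within distance `t - 1` of a tower. Assign to each
vertex of `V_n` such a tower: it lies in `V_{n+t-1}`, and it is assigned to at most the
`2t² - 2t + 1` vertices of its ball of radius `t - 1`. Hence
`(2n + 1)² ≤ (2t² - 2t + 1) |S ∩ V_{n+t-1}|`, and the liminf bound follows as `n → ∞`. -/

open Filter Topology

open Finset

noncomputable def l1Ball (s : ℕ) : Finset (ℤ × ℤ) :=
  (Icc (-(s : ℤ)) s ×ˢ Icc (-(s : ℤ)) s).filter (fun p => p.1.natAbs + p.2.natAbs ≤ s)

lemma mem_l1Ball {s : ℕ} {p : ℤ × ℤ} : p ∈ l1Ball s ↔ p.1.natAbs + p.2.natAbs ≤ s := by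
  simp only [l1Ball, mem_filter, mem_product, mem_Icc]
  omega

lemma card_image_graph_Icc (m : ℕ) (f : ℤ → ℤ) :
    ((Icc (-(m : ℤ)) m).image fun x => (x, f x)).card = 2 * m + 1 := by
  rw [card_image_of_injective _ fun x y h => congrArg Prod.fst h, Int.card_Icc]
  omega

/-- The ball of radius `s + 1` is the ball of radius `s` together with the upper and lower halves
of the sphere of radius `s + 1`, which have `2s + 3` and `2s + 1` points. -/
lemma card_l1Ball (s : ℕ) : (l1Ball s).card = 2 * s ^ 2 + 2 * s + 1 := by
  induction s with
  | zero =>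
    rw [show l1Ball 0 = {(0, 0)} by
      ext p; simp only [mem_l1Ball, mem_singleton, Prod.ext_iff]; omega]
    rfl
  | succ s ih =>
    set upper := (Icc (-((s + 1 : ℕ) : ℤ)) (s + 1 : ℕ)).image fun a => (a, (s + 1 : ℤ) - a.natAbs)
    set lower := (Icc (-(s : ℤ)) s).image fun a => (a, (a.natAbs : ℤ) - (s + 1))
    have mem_upper (p : ℤ × ℤ) :
        p ∈ upper ↔ p.1.natAbs ≤ s + 1 ∧ p.2 = (s + 1 : ℤ) - p.1.natAbs := by
      simp only [upper, mem_image, mem_Icc, Prod.ext_iff]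
      constructor
      · rintro ⟨a, ha, rfl, h⟩; omega
      · rintro ⟨h1, h2⟩; exact ⟨p.1, by omega, rfl, h2.symm⟩
    have mem_lower (p : ℤ × ℤ) :
        p ∈ lower ↔ p.1.natAbs ≤ s ∧ p.2 = (p.1.natAbs : ℤ) - (s + 1) := by
      simp only [lower, mem_image, mem_Icc, Prod.ext_iff]
      constructor
      · rintro ⟨a, ha, rfl, h⟩; omega
      · rintro ⟨h1, h2⟩; exact ⟨p.1, by omega, rfl, h2.symm⟩
    have h_split : l1Ball (s + 1) = l1Ball s ∪ (upper ∪ lower) := by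
      ext p
      simp only [mem_union, mem_l1Ball, mem_upper, mem_lower]
      omega
    have h_disj : Disjoint upper lower := by
      rw [disjoint_left]
      intro p hu hl
      rw [mem_upper] at hu; rw [mem_lower] at hl
      omega
    have h_disj' : Disjoint (l1Ball s) (upper ∪ lower) := by
      rw [disjoint_left]
      intro p hb hul
      rw [mem_l1Ball] at hb; rw [mem_union, mem_upper, mem_lower] at hul
      omega
    rw [h_split, card_union_of_disjoint h_disj', card_union_of_disjoint h_disj, ih,
      card_image_graph_Icc, card_image_graph_Icc]
    ring

lemma card_filter_gridDist_le (F : Finset (ℤ × ℤ)) (T : ℤ × ℤ) (s : ℕ) :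
    (F.filter fun v => gridDist v T ≤ s).card ≤ 2 * s ^ 2 + 2 * s + 1 := by
  rw [← card_l1Ball s]
  refine card_le_card_of_injOn (fun v => v - T) (fun v hv => ?_)
    fun a _ b _ h => sub_left_injective h
  rw [coe_filter] at hv
  simpa only [mem_coe, mem_l1Ball, Prod.fst_sub, Prod.snd_sub, gridDist] using hv.2

lemma card_square (n : ℕ) : (Icc (-(n : ℤ)) n ×ˢ Icc (-(n : ℤ)) n).card = (2 * n + 1) ^ 2 := by
  rw [card_product, Int.card_Icc, sq]
  congr <;> omega

lemma gridCount_le (S : Set (ℤ × ℤ)) (n : ℕ) : gridCount S n ≤ (2 * n + 1) ^ 2 := by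
  classical
  exact (card_filter_le _ _).trans_eq (card_square n)

lemma IsBroadcast.exists_mem_gridDist_lt {t r : ℕ} {S : Set (ℤ × ℤ)} (hS : IsBroadcast t r S)
    (hr : 0 < r) (v : ℤ × ℤ) : ∃ T ∈ S, gridDist v T < t := by
  classical
  obtain ⟨T, hT, -⟩ := exists_ne_zero_of_sum_ne_zero (hr.trans_le (hS v)).ne'
  exact ⟨T, (mem_filter.mp hT).2⟩

lemma sq_le_mul_gridCount {S : Set (ℤ × ℤ)} {s : ℕ} (hS : ∀ v, ∃ T ∈ S, gridDist v T ≤ s)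
    (n : ℕ) : (2 * n + 1) ^ 2 ≤ (2 * s ^ 2 + 2 * s + 1) * gridCount S (n + s) := by
  choose τ hτS hτd using hS
  rw [← card_square n, gridCount]
  refine card_le_mul_card_image_of_maps_to (f := τ) (fun v hv => ?_) _ fun T _ =>
    (card_le_card (monotone_filter_right _ fun v _ hv => hv ▸ hτd v)).trans
      (card_filter_gridDist_le _ T s)
  have hd := hτd v
  simp only [mem_filter, mem_product, mem_Icc, gridDist] at hv hd ⊢
  exact ⟨by push_cast; omega, hτS v⟩

lemma inv_le_liminf_div_sq {C : ℝ} (hC : 0 < C) (s : ℕ) {c : ℕ → ℝ}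
    (hc_le : ∀ m : ℕ, c m ≤ (2 * m + 1) ^ 2) (hc : ∀ n : ℕ, (2 * n + 1) ^ 2 ≤ C * c (n + s)) :
    1 / C ≤ atTop.liminf fun m : ℕ => c m / (2 * m + 1) ^ 2 := by
  set g : ℕ → ℝ := fun m => (1 - 2 * s / (2 * m + 1)) ^ 2 / C
  have hg : Tendsto g atTop (𝓝 (1 / C)) := by
    have h : Tendsto (fun m : ℕ => 2 * (m : ℝ) + 1) atTop atTop :=
      tendsto_atTop_add_const_right _ 1 (tendsto_natCast_atTop_atTop.const_mul_atTop two_pos)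
    simpa using (((tendsto_const_nhds (x := (1 : ℝ))).sub
      ((tendsto_const_nhds (x := 2 * (s : ℝ))).div_atTop h)).pow 2).div_const C
  have hg_le : g ≤ᶠ[atTop] fun m => c m / (2 * m + 1) ^ 2 := by
    filter_upwards [eventually_ge_atTop s] with m hm
    obtain ⟨n, rfl⟩ := Nat.exists_eq_add_of_le' hm
    have hg_eq : g (n + s) = (2 * n + 1) ^ 2 / C / (2 * (n + s : ℕ) + 1) ^ 2 := by
      simp only [g]
      field_simp
      push_cast
      ring
    rw [hg_eq]
    gcongr
    exact (div_le_iff₀' hC).2 (hc n)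
  have hbdd : ∀ m : ℕ, c m / (2 * m + 1) ^ 2 ≤ 1 := fun m =>
    div_le_one_of_le₀ (hc_le m) (by positivity)
  calc 1 / C = atTop.liminf g := hg.liminf_eq.symm
    _ ≤ _ := liminf_le_liminf hg_le hg.isBoundedUnder_ge (isCoboundedUnder_ge_of_le atTop hbdd)

theorem stmt3 (t : ℕ) (ht : 0 < t) (S : Set (ℤ × ℤ)) (hS : IsBroadcast t 1 S) :
    1 / (2 * (t : ℝ) ^ 2 - 2 * (t : ℝ) + 1) ≤
      Filter.atTop.liminf (fun n : ℕ => (gridCount S n : ℝ) / (2 * n + 1) ^ 2) := by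
  obtain ⟨s, rfl⟩ := Nat.exists_eq_add_one.mpr ht
  have h_cover (v : ℤ × ℤ) : ∃ T ∈ S, gridDist v T ≤ s := by
    obtain ⟨T, hT, hd⟩ := hS.exists_mem_gridDist_lt one_pos v
    exact ⟨T, hT, Nat.lt_succ_iff.mp hd⟩
  have h_const :
      2 * ((s + 1 : ℕ) : ℝ) ^ 2 - 2 * ((s + 1 : ℕ) : ℝ) + 1 = 2 * s ^ 2 + 2 * s + 1 := by
    push_cast; ring
  rw [h_const]
  refine inv_le_liminf_div_sq (by positivity) s (fun m => ?_) fun n => ?_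
  · exact_mod_cast gridCount_le S m
  · exact_mod_cast sq_le_mul_gridCount h_cover n
end

section
/- Let t be an integer with t > 2. There exists a (t,2) broadcast S ⊆ ℤ×ℤ whose density exists and equals 1/(2(t−1)²); that is, lim_{n→∞} |S ∩ V_n|/(2n+1)² = 1/(2(t−1)²), where V_n = {(a,b) ∈ ℤ×ℤ : |a| ≤ n, |b| ≤ n}. -/
open Filter Topology

/-! In the rotated coordinates `(a + b, a - b)` the grid distance becomes the sup-distance, and the
scaled checkerboard `m • {(a, b) | a + b even}` with `m = t - 1` becomes the square lattice
`2mℤ × 2mℤ`. Every vertex has offsets in `(-m, m]` from some lattice point: if both offsets are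
less than `m`, that one tower is at distance at most `t - 2`; otherwise the vertex lies halfway
between two towers at distance `m = t - 1`, each contributing signal `1`. The scaled checkerboard
meets `V_n` in the image of the checkerboard points of `V_K`, `K = ⌊n / m⌋`, and there are
`2K² + 2K + 1 ~ 2 (n / m)²` of these. -/

def checkerboard : Set (ℤ × ℤ) := {p | Even (p.1 + p.2)}

theorem gridDist_eq_max (u v : ℤ × ℤ) :
    gridDist u v = max (u.1 + u.2 - (v.1 + v.2)).natAbs (u.1 - u.2 - (v.1 - v.2)).natAbs := by
  simp only [gridDist]
  omega

section Signal

variable {t : ℕ} {S : Set (ℤ × ℤ)} {v : ℤ × ℤ}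

theorem sum_le_totalSignal (F : Finset (ℤ × ℤ)) (hF : ∀ T ∈ F, T ∈ S ∧ gridDist v T < t) :
    ∑ T ∈ F, (t - gridDist v T) ≤ totalSignal t S v := by
  refine Finset.sum_le_sum_of_subset fun T hT => ?_
  obtain ⟨hTS, hTv⟩ := hF T hT
  have hbox := hTv
  simp only [gridDist] at hbox
  simp only [Finset.mem_filter, Finset.mem_product, Finset.mem_Icc]
  exact ⟨by omega, hTS, hTv⟩

theorem two_le_totalSignal_of_mem {T : ℤ × ℤ} (hT : T ∈ S) (hd : gridDist v T + 2 ≤ t) :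
    2 ≤ totalSignal t S v := by
  have := sum_le_totalSignal (t := t) (v := v) {T} (by simpa using ⟨hT, by omega⟩)
  rw [Finset.sum_singleton] at this
  omega

theorem two_le_totalSignal_of_pair {T₁ T₂ : ℤ × ℤ} (hne : T₁ ≠ T₂) (h₁ : T₁ ∈ S) (h₂ : T₂ ∈ S)
    (hd₁ : gridDist v T₁ < t) (hd₂ : gridDist v T₂ < t) : 2 ≤ totalSignal t S v := by
  have := sum_le_totalSignal (t := t) (v := v) {T₁, T₂} (by simpa using ⟨⟨h₁, hd₁⟩, h₂, hd₂⟩)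
  rw [Finset.sum_pair hne] at this
  omega

end Signal

-- `((m : ℤ) • ·) '' A`, not `(m : ℤ) • A`: on sets the latter is the `m`-fold sum `A + ⋯ + A`.
theorem isBroadcast_image_smul_checkerboard {m : ℕ} (hm : 0 < m) :
    IsBroadcast (m + 1) 2 (((m : ℤ) • ·) '' checkerboard) := by
  rintro ⟨a, b⟩
  have h2m : (0 : ℤ) < 2 * m := by positivity
  obtain ⟨hx₁, hx₂⟩ := sub_toIocDiv_zsmul_mem_Ioc h2m (-m) (a + b)
  obtain ⟨hy₁, hy₂⟩ := sub_toIocDiv_zsmul_mem_Ioc h2m (-m) (a - b)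
  set k := toIocDiv h2m (-(m : ℤ)) (a + b)
  set l := toIocDiv h2m (-(m : ℤ)) (a - b)
  set x := a + b - k • (2 * (m : ℤ)) with hx
  set y := a - b - l • (2 * (m : ℤ)) with hy
  have tower (i j : ℤ) :
      ((m : ℤ) * (k + i + (l + j)), (m : ℤ) * (k + i - (l + j))) ∈ ((m : ℤ) • ·) '' checkerboard ∧
      gridDist (a, b) ((m : ℤ) * (k + i + (l + j)), (m : ℤ) * (k + i - (l + j))) =
        max (x - 2 * m * i).natAbs (y - 2 * m * j).natAbs := by
    refine ⟨⟨(k + i + (l + j), k + i - (l + j)), ⟨k + i, by ring⟩, rfl⟩, ?_⟩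
    rw [gridDist_eq_max, hx, hy, smul_eq_mul, smul_eq_mul]
    ring_nf
  obtain ⟨h₀, d₀⟩ := tower 0 0
  rcases hx₂.lt_or_eq with hx₂ | hx₂
  · rcases hy₂.lt_or_eq with hy₂ | hy₂
    · exact two_le_totalSignal_of_mem h₀ (by omega)
    · obtain ⟨h₁, d₁⟩ := tower 0 1
      exact two_le_totalSignal_of_pair (by simp [Prod.ext_iff]; omega) h₀ h₁ (by omega) (by omega)
  · obtain ⟨h₁, d₁⟩ := tower 1 0
    exact two_le_totalSignal_of_pair (by simp [Prod.ext_iff]; omega) h₀ h₁ (by omega) (by omega)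

theorem mul_mem_Icc_iff_mem_Icc_ediv {m : ℤ} (hm : 0 < m) (n a : ℤ) :
    m * a ∈ Finset.Icc (-n) n ↔ a ∈ Finset.Icc (-(n / m)) (n / m) := by
  simp only [Finset.mem_Icc, neg_le, Int.le_ediv_iff_mul_le hm]
  constructor <;> rintro ⟨h₁, h₂⟩ <;> constructor <;> linarith

theorem gridCount_image_smul (A : Set (ℤ × ℤ)) {m : ℕ} (hm : 0 < m) (n : ℕ) :
    gridCount (((m : ℤ) • ·) '' A) n = gridCount A (n / m) := by
  have hm' : (0 : ℤ) < m := by exact_mod_cast hm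
  have hscale (a : ℤ) : (m : ℤ) * a ∈ Finset.Icc (-(n : ℤ)) n ↔
      a ∈ Finset.Icc (-((n / m : ℕ) : ℤ)) ((n / m : ℕ) : ℤ) := by
    push_cast
    exact mul_mem_Icc_iff_mem_Icc_ediv hm' n a
  unfold gridCount
  symm
  rw [← Finset.card_image_of_injective _ (smul_right_injective (ℤ × ℤ) hm'.ne')]
  congr 1
  ext ⟨x, y⟩
  simp only [Finset.mem_filter, Finset.mem_product, Finset.mem_image, Set.mem_image, Prod.exists,
    Prod.smul_mk, smul_eq_mul, Prod.mk.injEq]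
  constructor
  · rintro ⟨a, b, ⟨⟨ha, hb⟩, hab⟩, rfl, rfl⟩
    exact ⟨⟨(hscale a).2 ha, (hscale b).2 hb⟩, a, b, hab, rfl, rfl⟩
  · rintro ⟨⟨hx, hy⟩, a, b, hab, rfl, rfl⟩
    exact ⟨a, b, ⟨⟨(hscale a).1 hx, (hscale b).1 hy⟩, hab⟩, rfl, rfl⟩

theorem card_filter_even_add_Icc (K : ℕ) :
    ((Finset.Icc (-(K : ℤ)) K).filter (fun x : ℤ => Even (x + K))).card = K + 1 := by
  have h : (Finset.Icc (-(K : ℤ)) K).filter (fun x : ℤ => Even (x + K)) =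
      (Finset.Icc (0 : ℤ) K).image (fun i : ℤ => 2 * i - K) := by
    ext x
    simp only [Finset.mem_filter, Finset.mem_Icc, Finset.mem_image, Int.even_iff]
    constructor
    · rintro ⟨⟨hx₁, hx₂⟩, hx⟩
      exact ⟨(x + K) / 2, ⟨by omega, by omega⟩, by omega⟩
    · rintro ⟨i, ⟨hi₁, hi₂⟩, rfl⟩
      omega
  rw [h, Finset.card_image_of_injective _ (fun i j hij => by simpa using hij), Int.card_Icc]
  omega

theorem gridCount_checkerboard (K : ℕ) : gridCount checkerboard K = 2 * K ^ 2 + 2 * K + 1 := by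
  classical
  set I := Finset.Icc (-(K : ℤ)) K
  set E := I.filter (fun x : ℤ => Even (x + K))
  set O := I.filter (fun x : ℤ => ¬Even (x + K))
  have hE : E.card = K + 1 := card_filter_even_add_Icc K
  have hO : O.card = K := by
    have := Finset.card_filter_add_card_filter_not (s := I) (fun x : ℤ => Even (x + K))
    change E.card + O.card = I.card at this
    rw [hE, Int.card_Icc] at this
    omega
  -- `a + b` is even iff `a + K` and `b + K` have the same parity
  have hsplit : (I ×ˢ I).filter (· ∈ checkerboard) = E ×ˢ E ∪ O ×ˢ O := by
    ext ⟨a, b⟩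
    simp only [Finset.mem_filter, Finset.mem_product, Finset.mem_union, checkerboard,
      Set.mem_ofPred_eq, Int.even_iff, E, O, I, Finset.mem_Icc]
    omega
  have hdisj : Disjoint (E ×ˢ E) (O ×ˢ O) :=
    Finset.disjoint_left.2 fun p hpE hpO => by
      simp only [Finset.mem_product, Finset.mem_filter, E, O] at hpE hpO
      exact hpO.1.2 hpE.1.2
  unfold gridCount
  rw [hsplit, Finset.card_union_of_disjoint hdisj, Finset.card_product, Finset.card_product, hE, hO]
  ring

theorem tendsto_nat_div_div_atTop {m : ℕ} (hm : 0 < m) :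
    Tendsto (fun n : ℕ => ((n / m : ℕ) : ℝ) / n) atTop (𝓝 (1 / m)) := by
  refine ((tendsto_nat_floor_mul_div_atTop (a := (1 / m : ℝ)) (by positivity)).comp
    tendsto_natCast_atTop_atTop).congr fun n => ?_
  simp only [Function.comp_apply, one_div_mul_eq_div, Nat.floor_div_eq_div]

theorem tendsto_checkerboard_count_div {m : ℕ} (hm : 0 < m) :
    Tendsto (fun n : ℕ => ((2 * (n / m) ^ 2 + 2 * (n / m) + 1 : ℕ) : ℝ) / (2 * n + 1) ^ 2) atTop
      (𝓝 (1 / (2 * (m : ℝ) ^ 2))) := by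
  have hq := tendsto_nat_div_div_atTop hm
  have hε : Tendsto (fun n : ℕ => 1 / (n : ℝ)) atTop (𝓝 0) := tendsto_one_div_atTop_nhds_zero_nat
  have hnum := (((hq.pow 2).const_mul 2).add ((hq.mul hε).const_mul 2)).add (hε.pow 2)
  have hden := ((tendsto_const_nhds (x := (2 : ℝ))).add hε).pow 2
  have hlim : (2 * (1 / (m : ℝ)) ^ 2 + 2 * (1 / m * 0) + 0 ^ 2) / (2 + 0) ^ 2 =
      1 / (2 * (m : ℝ) ^ 2) := by
    field_simp
    ring
  refine (hlim ▸ hnum.div hden (by norm_num)).congr' ?_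
  filter_upwards [eventually_ne_atTop 0] with n hn
  have hn' : (n : ℝ) ≠ 0 := by exact_mod_cast hn
  rw [Pi.div_apply]
  push_cast
  field_simp

theorem stmt6 (t : ℕ) (ht : 2 < t) :
    ∃ S : Set (ℤ × ℤ), IsBroadcast t 2 S ∧
      Filter.Tendsto (fun n : ℕ => (gridCount S n : ℝ) / (2 * n + 1) ^ 2)
        Filter.atTop (nhds (1 / (2 * ((t : ℝ) - 1) ^ 2))) := by
  obtain ⟨m, rfl⟩ : ∃ m, t = m + 1 := ⟨t - 1, by omega⟩
  have hm : 0 < m := by omega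
  refine ⟨((m : ℤ) • ·) '' checkerboard, isBroadcast_image_smul_checkerboard hm, ?_⟩
  simp only [gridCount_image_smul _ hm, gridCount_checkerboard]
  push_cast
  simpa using tendsto_checkerboard_count_div hm
end

section
/- The standard pattern T(3,1) = {(3x+y, y) : x, y ∈ ℤ} is a (2,2) broadcast on the infinite grid; that is, for every vertex v ∈ ℤ×ℤ, the total signal received at v from towers of strength 2 located at the points of T(3,1) is at least 2. -/
open Filter Topology

/-! Every vertex `(a, b)` either lies in `T(3,1)` (when `3 ∣ a - b`) or has two towers of
`T(3,1)` among its four neighbours, one horizontal and one vertical; either way it receives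
signal `2`. -/

section Signal

variable {t : ℕ} {S : Set (ℤ × ℤ)} {v : ℤ × ℤ}

theorem le_totalSignal_of_mem (ht : 0 < t) (hv : v ∈ S) : t ≤ totalSignal t S v := by
  simpa [gridDist] using sum_le_totalSignal (S := S) (v := v) {v} (by simp [gridDist, hv, ht])

theorem two_mul_pred_le_totalSignal {u w : ℤ × ℤ} (ht : 1 < t) (hu : u ∈ S) (hw : w ∈ S)
    (huw : u ≠ w) (hvu : gridDist v u = 1) (hvw : gridDist v w = 1) :
    2 * (t - 1) ≤ totalSignal t S v := by
  have hpair := sum_le_totalSignal (t := t) (S := S) (v := v) {u, w} <| by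
    simp only [Finset.mem_insert, Finset.mem_singleton]
    rintro T (rfl | rfl)
    exacts [⟨hu, by omega⟩, ⟨hw, by omega⟩]
  rw [Finset.sum_pair huw, hvu, hvw] at hpair
  omega

end Signal

theorem mem_stdPattern_one_iff {d p q : ℤ} : (p, q) ∈ stdPattern d 1 ↔ d ∣ p - q := by
  constructor
  · rintro ⟨x, y, h⟩
    simp only [Prod.mk.injEq] at h
    exact ⟨x, by omega⟩
  · rintro ⟨x, hx⟩
    exact ⟨x, q, Prod.ext (by dsimp only; linarith) rfl⟩

theorem stmt7 : IsBroadcast 2 2 (stdPattern 3 1) := by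
  rintro ⟨a, b⟩
  obtain h | h | h : (a - b) % 3 = 0 ∨ (a - b) % 3 = 1 ∨ (a - b) % 3 = 2 := by omega
  · exact le_totalSignal_of_mem two_pos (mem_stdPattern_one_iff.2 (by omega))
  · exact two_mul_pred_le_totalSignal (u := (a - 1, b)) (w := (a, b + 1)) one_lt_two
      (mem_stdPattern_one_iff.2 (by omega)) (mem_stdPattern_one_iff.2 (by omega))
      (by simp) (by simp [gridDist]) (by simp [gridDist])
  · exact two_mul_pred_le_totalSignal (u := (a + 1, b)) (w := (a, b - 1)) one_lt_two
      (mem_stdPattern_one_iff.2 (by omega)) (mem_stdPattern_one_iff.2 (by omega))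
      (by simp) (by simp [gridDist]) (by simp [gridDist])
end

section
/- Every (2,2) broadcast S ⊆ ℤ×ℤ satisfies liminf_{n→∞} |S ∩ V_n|/(2n+1)² ≥ 1/3, where V_n = {(a,b) ∈ ℤ×ℤ : |a| ≤ n, |b| ≤ n}. -/
/-
Double counting of signal. Every vertex of `V_n` receives signal at least `2`, while a tower of
strength `2` sends out `6` units in total (`2` to itself and `1` to each of its four neighbours),
and only towers in `V_(n+2)` reach `V_n`. Hence `2 (2n+1)² ≤ 6 |S ∩ V_(n+2)|`, and the shift from
`n` to `n + 2` does not affect the density in the limit. The argument works for any `(t,r)`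
broadcast, giving the density bound `r / m_t` with `m_t` the signal sent out by one tower.
-/

open Filter Topology

open Finset

noncomputable def gridBox (n : ℕ) : Finset (ℤ × ℤ) :=
  Icc (-(n : ℤ)) n ×ˢ Icc (-(n : ℤ)) n

lemma mem_gridBox {n : ℕ} {v : ℤ × ℤ} :
    v ∈ gridBox n ↔ v.1.natAbs ≤ n ∧ v.2.natAbs ≤ n := by
  simp only [gridBox, mem_product, mem_Icc]
  omega

lemma card_gridBox (n : ℕ) : #(gridBox n) = (2 * n + 1) ^ 2 := by
  rw [gridBox, card_product, Int.card_Icc, sq]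
  congr 1 <;> omega

open Classical in
lemma gridCount_eq_card_filter (S : Set (ℤ × ℤ)) (n : ℕ) :
    gridCount S n = #{v ∈ gridBox n | v ∈ S} := rfl

lemma gridDist_add_right_self (d T : ℤ × ℤ) : gridDist (d + T) T = gridDist d 0 := by
  simp [gridDist]

noncomputable def signalMass (t : ℕ) : ℕ := ∑ d ∈ gridBox t, (t - gridDist d 0)

lemma signalMass_two : signalMass 2 = 6 := by decide

lemma sum_signal_le_signalMass (t : ℕ) (T : ℤ × ℤ) (s : Finset (ℤ × ℤ)) :
    ∑ v ∈ s, (t - gridDist v T) ≤ signalMass t := by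
  calc ∑ v ∈ s, (t - gridDist v T)
      ≤ ∑ v ∈ (gridBox t).map (Equiv.addRight T).toEmbedding, (t - gridDist v T) := by
        refine sum_le_sum_of_ne_zero fun v _ hv => mem_map_equiv.2 (mem_gridBox.2 ?_)
        simp only [gridDist, Equiv.addRight_symm_apply, Prod.fst_add, Prod.snd_add, Prod.fst_neg,
          Prod.snd_neg] at hv ⊢
        omega
    _ = signalMass t := by
        simp only [sum_map, Equiv.coe_toEmbedding, Equiv.coe_addRight, gridDist_add_right_self,
          signalMass]

open Classical in
lemma totalSignal_eq_sum_gridBox (t : ℕ) (S : Set (ℤ × ℤ)) {n : ℕ} {v : ℤ × ℤ}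
    (hv : v ∈ gridBox n) :
    totalSignal t S v = ∑ T ∈ gridBox (n + t) with T ∈ S, (t - gridDist v T) := by
  -- truncated subtraction already kills the towers at distance `≥ t`
  rw [totalSignal, ← sum_filter_of_ne (s := {T ∈ gridBox (n + t) | T ∈ S})
    (p := fun T => gridDist v T < t) fun T _ h => by omega, filter_filter]
  refine sum_congr (Finset.ext fun T => ?_) fun _ _ => rfl
  rw [mem_filter, mem_filter]
  simp only [mem_product, mem_Icc, mem_gridBox, gridDist] at hv ⊢
  constructor <;> rintro ⟨-, hTS, hd⟩ <;> exact ⟨by omega, hTS, hd⟩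

open Classical in
lemma IsBroadcast.mul_sq_le {t r : ℕ} {S : Set (ℤ × ℤ)} (hS : IsBroadcast t r S) (n : ℕ) :
    r * (2 * n + 1) ^ 2 ≤ signalMass t * gridCount S (n + t) := by
  calc r * (2 * n + 1) ^ 2 = ∑ v ∈ gridBox n, r := by
        rw [sum_const, card_gridBox, smul_eq_mul, mul_comm]
    _ ≤ ∑ v ∈ gridBox n, totalSignal t S v := sum_le_sum fun v _ => hS v
    _ = ∑ v ∈ gridBox n, ∑ T ∈ gridBox (n + t) with T ∈ S, (t - gridDist v T) :=
        sum_congr rfl fun v hv => totalSignal_eq_sum_gridBox t S hv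
    _ = ∑ T ∈ gridBox (n + t) with T ∈ S, ∑ v ∈ gridBox n, (t - gridDist v T) := sum_comm
    _ ≤ ∑ T ∈ gridBox (n + t) with T ∈ S, signalMass t :=
        sum_le_sum fun T _ => sum_signal_le_signalMass t T _
    _ = signalMass t * gridCount S (n + t) := by
        rw [sum_const, smul_eq_mul, mul_comm, gridCount_eq_card_filter]

lemma le_liminf_of_mul_sq_le_gridCount {S : Set (ℤ × ℤ)} {c : ℝ} {k : ℕ}
    (h : ∀ n : ℕ, c * (2 * n + 1) ^ 2 ≤ gridCount S (n + k)) :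
    c ≤ atTop.liminf (fun n : ℕ => (gridCount S n : ℝ) / (2 * n + 1) ^ 2) := by
  set density := fun n : ℕ => (gridCount S n : ℝ) / (2 * n + 1) ^ 2
  have hratio :
      Tendsto (fun n : ℕ => c * ((1 + 2 * n) / ((2 * k + 1) + 2 * n)) ^ 2) atTop (𝓝 c) := by
    simpa using ((tendsto_add_mul_div_add_mul_atTop_nhds (1 : ℝ) (2 * k + 1) 2
      two_ne_zero).pow 2).const_mul c
  have hle (n : ℕ) : c * ((1 + 2 * n) / ((2 * k + 1) + 2 * n)) ^ 2 ≤ density (n + k) := by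
    have hden : (2 * k + 1 + 2 * n : ℝ) = 2 * (n + k : ℕ) + 1 := by push_cast; ring
    rw [hden, div_pow, ← mul_div_assoc, add_comm 1]
    simp only [density]
    gcongr
    exact h n
  have hbdd : IsCoboundedUnder (· ≥ ·) atTop fun n => density (n + k) := by
    refine (isBoundedUnder_of ⟨1, fun n => ?_⟩).isCoboundedUnder_ge
    rw [div_le_one (by positivity)]
    exact_mod_cast gridCount_le S (n + k)
  rw [← liminf_nat_add density k, ← hratio.liminf_eq]
  exact liminf_le_liminf (Eventually.of_forall hle) hratio.isBoundedUnder_ge hbdd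

lemma IsBroadcast.div_signalMass_le_liminf {t r : ℕ} {S : Set (ℤ × ℤ)}
    (hS : IsBroadcast t r S) :
    (r / signalMass t : ℝ) ≤
      atTop.liminf (fun n : ℕ => (gridCount S n : ℝ) / (2 * n + 1) ^ 2) := by
  refine le_liminf_of_mul_sq_le_gridCount (k := t) fun n => ?_
  rcases (signalMass t).eq_zero_or_pos with h0 | hpos
  · simp [h0]
  · rw [div_mul_eq_mul_div, div_le_iff₀ (by exact_mod_cast hpos)]
    have := hS.mul_sq_le n
    rw [mul_comm (signalMass t)] at this
    exact_mod_cast this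

theorem stmt8 (S : Set (ℤ × ℤ)) (hS : IsBroadcast 2 2 S) :
    (1 : ℝ) / 3 ≤
      Filter.atTop.liminf (fun n : ℕ => (gridCount S n : ℝ) / (2 * n + 1) ^ 2) := by
  convert hS.div_signalMass_le_liminf using 1
  norm_num [signalMass_two]
end

section
/- The standard pattern T(5,3) = {(5x+3y, y) : x, y ∈ ℤ} is a (2,1) broadcast on the infinite grid; that is, for every vertex v ∈ ℤ×ℤ, the total signal received at v from towers of strength 2 located at the points of T(5,3) is at least 1. -/
open Filter Topology

lemma sub_gridDist_le_totalSignal {t : ℕ} {S : Set (ℤ × ℤ)} {v T : ℤ × ℤ} (hT : T ∈ S)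
    (hd : gridDist v T < t) : t - gridDist v T ≤ totalSignal t S v := by
  classical
  have hbox : (v.1 - T.1).natAbs + (v.2 - T.2).natAbs < t := hd
  refine Finset.single_le_sum (f := fun T => t - gridDist v T) (fun _ _ => Nat.zero_le _) ?_
  simp only [Finset.mem_filter, Finset.mem_product, Finset.mem_Icc]
  refine ⟨⟨⟨?_, ?_⟩, ?_, ?_⟩, hT, hd⟩ <;> omega

/-- Moving one step changes `a - 3b` by `±1` or `∓3 ≡ ±2 (mod 5)`, so the closed neighbourhood of
any vertex meets every residue class, in particular the class `0` defining `T(5,3)`. -/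
lemma exists_mem_stdPattern_five_three_gridDist_le_one (v : ℤ × ℤ) :
    ∃ T ∈ stdPattern 5 3, gridDist v T ≤ 1 := by
  obtain ⟨a, b⟩ := v
  simp only [mem_stdPattern_iff, gridDist]
  have hres : (a - 3 * b) % 5 = 0 ∨ (a - 3 * b) % 5 = 1 ∨ (a - 3 * b) % 5 = 2 ∨
      (a - 3 * b) % 5 = 3 ∨ (a - 3 * b) % 5 = 4 := by omega
  rcases hres with h | h | h | h | h
  · exact ⟨(a, b), by simp only; omega, by simp⟩
  · exact ⟨(a - 1, b), by simp only; omega, by simp⟩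
  · exact ⟨(a, b - 1), by simp only; omega, by simp⟩
  · exact ⟨(a, b + 1), by simp only; omega, by simp⟩
  · exact ⟨(a + 1, b), by simp only; omega, by simp⟩

theorem stmt12 : IsBroadcast 2 1 (stdPattern 5 3) := by
  intro v
  obtain ⟨T, hT, hd⟩ := exists_mem_stdPattern_five_three_gridDist_le_one v
  have := sub_gridDist_le_totalSignal (t := 2) (v := v) hT (by omega)
  omega
end
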